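/- arXiv:2006.04379 — 2 statements merged into one kernel-verified Lean document; each statement's English description precedes it below -/
import Mathlib

section
/- The eigenfunctions ψ_n(x) = (2ⁿ n!)^{-1/2} (mω/π)^{1/4} e^{-mωx²/2} H_n(√(mω) x) of the 1D harmonic oscillator form an orthonormal family in L²(ℝ): ∫_ℝ ψ_m(x) ψ_n(x) dx = δ_{mn}. -/
open MeasureTheory Real

/-- Physicists' Hermite polynomials `H_n(z) = (-1)^n e^{z²} (d/dz)^n e^{-z²}`. -/
noncomputable def hermitePhys (n : ℕ) (z : ℝ) : ℝ :=
  (-1) ^ n * Real.exp (z ^ 2) * (deriv^[n] fun t : ℝ => Real.exp (-t ^ 2)) z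

/-- The `n`-th eigenfunction of the 1D harmonic oscillator. -/
noncomputable def oscillatorEigenfunction (m ω : ℝ) (n : ℕ) (x : ℝ) : ℝ :=
  (Real.sqrt (2 ^ n * n.factorial))⁻¹ * (m * ω / Real.pi) ^ ((1 : ℝ) / 4) *
    Real.exp (-(m * ω * x ^ 2) / 2) * hermitePhys n (Real.sqrt (m * ω) * x)

/-!
Write `He_n = Polynomial.hermite n` for the probabilists' Hermite polynomials, so that
`(d/dx)ⁿ e^{-x²/2} = (-1)ⁿ He_n(x) e^{-x²/2}` and `H_n(z) = 2^{n/2} He_n(√2 z)`. For `a ≤ b`,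
integrating `He_a · (d/dx)ᵇ e^{-x²/2}` by parts `b` times moves all derivatives onto `He_a`,
a monic polynomial of degree `a`; this leaves `0` if `a < b` and `a! ∫ e^{-x²/2} = a! √(2π)`
if `a = b`. The substitution `y = √(2mω) x` turns `∫ ψ_a ψ_b` into exactly this integral,
and the normalising constants cancel.
-/

open Polynomial

theorem integral_exp_neg_sq_div_two : ∫ x : ℝ, exp (-(x ^ 2 / 2)) = √(2 * π) := by
  simpa [neg_div, div_eq_inv_mul, div_inv_eq_mul, mul_comm] using integral_gaussian (1 / 2)

namespace Polynomial

theorem iterate_derivative_hermite_self (n : ℕ) :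
    derivative^[n] (hermite n) = C (n.factorial : ℤ) := by
  have hdeg : (derivative^[n] (hermite n)).natDegree = 0 := by
    simpa [natDegree_hermite] using natDegree_iterate_derivative (hermite n) n
  rw [eq_C_of_natDegree_eq_zero hdeg, coeff_iterate_derivative, zero_add, coeff_hermite_self,
    Nat.descFactorial_self, nsmul_one]

theorem differentiable_iterate_deriv_gaussian (n : ℕ) :
    Differentiable ℝ (deriv^[n] fun y : ℝ => exp (-(y ^ 2 / 2))) := by
  rw [_root_.funext (deriv_gaussian_eq_hermite_mul_gaussian n)]
  exact ((hermite n).differentiable_aeval.const_mul _).mul (by fun_prop)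

section Algebra

variable {R : Type*} [CommRing R] [Algebra R ℝ]

theorem integrable_aeval_mul_exp_neg_mul_sq {b : ℝ} (hb : 0 < b) (q : R[X]) :
    Integrable fun x : ℝ => aeval x q * exp (-b * x ^ 2) := by
  have hmonomial (k : ℕ) : Integrable fun x : ℝ => x ^ k * exp (-b * x ^ 2) := by
    simpa only [rpow_natCast] using
      integrable_rpow_mul_exp_neg_mul_sq hb (s := k) (by linarith [k.cast_nonneg (α := ℝ)])
  simp_rw [aeval_eq_sum_range, Finset.sum_mul, Algebra.smul_def, mul_assoc]
  exact integrable_finsetSum _ fun k _ => (hmonomial k).const_mul _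

theorem integrable_aeval_mul_iterate_deriv_gaussian (q : R[X]) (n : ℕ) :
    Integrable fun x : ℝ => aeval x q * deriv^[n] (fun y : ℝ => exp (-(y ^ 2 / 2))) x := by
  have h := (integrable_aeval_mul_exp_neg_mul_sq (b := 1 / 2) (by norm_num)
    (q * map (algebraMap ℤ R) (hermite n))).const_mul ((-1 : ℝ) ^ n)
  refine h.congr (ae_of_all _ fun x => ?_)
  simp only [deriv_gaussian_eq_hermite_mul_gaussian, map_mul, aeval_map_algebraMap]
  ring_nf

/-- The boundary terms of each integration by parts vanish because polynomials times Gaussians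
are integrable. -/
theorem integral_aeval_mul_iterate_deriv_gaussian (q : R[X]) (n : ℕ) :
    ∫ x : ℝ, aeval x q * deriv^[n] (fun y : ℝ => exp (-(y ^ 2 / 2))) x
      = (-1) ^ n * ∫ x : ℝ, aeval x (derivative^[n] q) * exp (-(x ^ 2 / 2)) := by
  induction n generalizing q with
  | zero => simp
  | succ n ih =>
    have hG (x : ℝ) : HasDerivAt (deriv^[n] fun y : ℝ => exp (-(y ^ 2 / 2)))
        (deriv^[n + 1] (fun y : ℝ => exp (-(y ^ 2 / 2))) x) x := by
      rw [Function.iterate_succ_apply']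
      exact (differentiable_iterate_deriv_gaussian n x).hasDerivAt
    rw [integral_mul_deriv_eq_deriv_mul_of_integrable (fun x _ => q.hasDerivAt_aeval x)
      (fun x _ => hG x) (integrable_aeval_mul_iterate_deriv_gaussian q (n + 1))
      (integrable_aeval_mul_iterate_deriv_gaussian (derivative q) n)
      (integrable_aeval_mul_iterate_deriv_gaussian q n), ih, Function.iterate_succ_apply]
    ring

end Algebra

theorem integral_hermite_mul_hermite_mul_gaussian_of_le {a b : ℕ} (hab : a ≤ b) :
    ∫ x : ℝ, aeval x (hermite a) * aeval x (hermite b) * exp (-(x ^ 2 / 2))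
      = if a = b then a.factorial * √(2 * π) else 0 := by
  have hsign : ((-1 : ℝ) ^ b) ^ 2 = 1 := by simp [← pow_mul]
  have hweight (x : ℝ) : aeval x (hermite b) * exp (-(x ^ 2 / 2))
      = (-1) ^ b * deriv^[b] (fun y : ℝ => exp (-(y ^ 2 / 2))) x := by
    rw [deriv_gaussian_eq_hermite_mul_gaussian]
    linear_combination -(aeval x (hermite b) * exp (-(x ^ 2 / 2))) * hsign
  simp_rw [mul_assoc, hweight, mul_left_comm _ ((-1 : ℝ) ^ b), integral_const_mul,
    integral_aeval_mul_iterate_deriv_gaussian, ← mul_assoc, ← sq, hsign, one_mul]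
  rcases hab.eq_or_lt with rfl | hlt
  · rw [iterate_derivative_hermite_self, if_pos rfl]
    simp [integral_const_mul, integral_exp_neg_sq_div_two]
  · rw [iterate_derivative_eq_zero (natDegree_hermite.trans_lt hlt), if_neg hlt.ne]
    simp

theorem integral_hermite_mul_hermite_mul_gaussian (a b : ℕ) :
    ∫ x : ℝ, aeval x (hermite a) * aeval x (hermite b) * exp (-(x ^ 2 / 2))
      = if a = b then a.factorial * √(2 * π) else 0 := by
  rcases le_total a b with hab | hba
  · exact integral_hermite_mul_hermite_mul_gaussian_of_le hab
  · simp_rw [mul_comm (aeval _ (hermite a)), integral_hermite_mul_hermite_mul_gaussian_of_le hba,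
      eq_comm (a := b)]
    split_ifs with h
    · rw [h]
    · rfl

end Polynomial

theorem hermitePhys_eq_aeval_hermite (n : ℕ) (z : ℝ) :
    hermitePhys n z = √2 ^ n * aeval (√2 * z) (hermite n) := by
  have hscale : (fun t : ℝ => exp (-t ^ 2)) = fun t => exp (-((√2 * t) ^ 2 / 2)) := by
    ext t
    rw [mul_pow, sq_sqrt zero_le_two]
    ring_nf
  have hsign : ((-1 : ℝ) ^ n) ^ 2 = 1 := by simp [← pow_mul]
  have hsmooth : ContDiff ℝ n fun y : ℝ => exp (-(y ^ 2 / 2)) := by fun_prop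
  have hexp : exp (z ^ 2) * exp (-((√2 * z) ^ 2 / 2)) = 1 := by
    rw [← exp_add, mul_pow, sq_sqrt zero_le_two]
    simp
  rw [hermitePhys, hscale, ← iteratedDeriv_eq_iterate, iteratedDeriv_comp_const_mul hsmooth,
    iteratedDeriv_eq_iterate]
  beta_reduce
  rw [deriv_gaussian_eq_hermite_mul_gaussian]
  linear_combination (√2 ^ n * aeval (√2 * z) (hermite n)) * (((-1) ^ n) ^ 2 * hexp + hsign)

theorem oscillatorEigenfunction_mul_oscillatorEigenfunction {m ω : ℝ} (hmω : 0 ≤ m * ω)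
    (a b : ℕ) (x : ℝ) :
    oscillatorEigenfunction m ω a x * oscillatorEigenfunction m ω b x
      = √(m * ω / π) / √(a.factorial * b.factorial) *
        (aeval (√2 * √(m * ω) * x) (hermite a) * aeval (√2 * √(m * ω) * x) (hermite b) *
          exp (-((√2 * √(m * ω) * x) ^ 2 / 2))) := by
  have hnorm (n : ℕ) : √(2 ^ n * n.factorial) = √2 ^ n * √n.factorial := by
    have hpow : √(2 ^ n) = √2 ^ n := by
      rw [← sqrt_sq (by positivity : 0 ≤ √2 ^ n), ← pow_mul, mul_comm, pow_mul, sq_sqrt zero_le_two]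
    rw [sqrt_mul (by positivity), hpow]
  have hroot : (m * ω / π) ^ (1 / 4 : ℝ) * (m * ω / π) ^ (1 / 4 : ℝ) = √(m * ω / π) := by
    rw [← rpow_add' (by positivity) (by norm_num), sqrt_eq_rpow]
    norm_num
  have hexp : exp (-(m * ω * x ^ 2) / 2) * exp (-(m * ω * x ^ 2) / 2)
      = exp (-((√2 * √(m * ω) * x) ^ 2 / 2)) := by
    rw [← exp_add, mul_pow, mul_pow, sq_sqrt zero_le_two, sq_sqrt hmω]
    ring_nf
  simp only [oscillatorEigenfunction, hermitePhys_eq_aeval_hermite, hnorm,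
    sqrt_mul (Nat.cast_nonneg _), ← mul_assoc √2]
  rw [← hroot, ← hexp]
  field_simp

theorem harmonic_oscillator_orthonormal (m ω : ℝ) (hm : 0 < m) (hω : 0 < ω)
    (a b : ℕ) :
    ∫ x : ℝ, oscillatorEigenfunction m ω a x * oscillatorEigenfunction m ω b x
      = if a = b then 1 else 0 := by
  have hmω : 0 < m * ω := mul_pos hm hω
  have hs : 0 < √2 * √(m * ω) := by positivity
  simp_rw [oscillatorEigenfunction_mul_oscillatorEigenfunction hmω.le, integral_const_mul,
    Measure.integral_comp_mul_left (fun y => aeval y (hermite a) * aeval y (hermite b) *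
      exp (-(y ^ 2 / 2))), integral_hermite_mul_hermite_mul_gaussian, abs_of_pos (inv_pos.2 hs),
    smul_eq_mul]
  split_ifs with hab
  · subst hab
    rw [sqrt_mul_self (Nat.cast_nonneg _), sqrt_div hmω.le, sqrt_mul zero_le_two]
    field_simp
  · simp
end

section
/- Let Σ be a symmetric positive definite d×d matrix, Z_Σ = (d-1)! c_{d-1} (det Σ)^{1/2}, and B a symmetric d×d matrix. Then (1/Z_Σ) ∫_{ℝ^d} exp(-|Σ^{-1/2} r|) (rᵀ B r) dr = (d+1) Tr(Σ^{1/2} B Σ^{1/2}). -/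
open MeasureTheory Matrix Real

/-- The positive semidefinite square root of a positive semidefinite matrix (the definition
`Matrix.PosSemidef.sqrt` of the older Mathlib, since removed). -/
noncomputable def Matrix.PosSemidef.sqrt {n : Type*} [Fintype n] [DecidableEq n]
    {A : Matrix n n ℝ} (hA : A.PosSemidef) : Matrix n n ℝ :=
  hA.1.eigenvectorUnitary.1 * diagonal ((↑) ∘ (√·) ∘ hA.1.eigenvalues) *
  (star hA.1.eigenvectorUnitary : Matrix n n ℝ)

/-!
Substituting `r = Σ^{1/2} x` turns the kernel into `exp (-‖x‖)` and the quadratic form into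
`xᵀ (Σ^{1/2} B Σ^{1/2}) x`, at the cost of the Jacobian `det Σ^{1/2} = (det Σ)^{1/2}`.
For a radial weight `f ‖x‖`, reflecting one coordinate kills the off-diagonal second moments and
swapping two coordinates makes the diagonal ones equal, so
`∫ f ‖x‖ xᵀ A x = (tr A / d) ∫ f ‖x‖ ‖x‖²`. In polar coordinates
`∫ exp (-‖x‖) ‖x‖² = c_{d-1} (d+1)!`, and `(d+1)! = (d+1) d (d-1)!` absorbs the `1/d`.
-/

open Set Module

section RadialMoments

variable {ι : Type*} [Fintype ι] (f : ℝ → ℝ)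

theorem integral_radial_mul_coord_mul_coord_of_ne {i j : ι} (hij : i ≠ j) :
    ∫ x : EuclideanSpace ℝ ι, f ‖x‖ * (x i * x j) = 0 := by
  classical
  let R : EuclideanSpace ℝ ι ≃ₗᵢ[ℝ] EuclideanSpace ℝ ι := LinearIsometryEquiv.piLpCongrRight 2
    fun k => if k = i then LinearIsometryEquiv.neg ℝ else LinearIsometryEquiv.refl ℝ ℝ
  have hR (x : EuclideanSpace ℝ ι) : f ‖R x‖ * (R x i * R x j) = -(f ‖x‖ * (x i * x j)) := by
    rw [R.norm_map]
    simp [R, hij.symm]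
  have := integral_comp R fun x => f ‖x‖ * (x i * x j)
  simp only [hR, integral_neg] at this
  linarith

theorem integral_radial_mul_coord_mul_self_eq (i j : ι) :
    ∫ x : EuclideanSpace ℝ ι, f ‖x‖ * (x i * x i) =
      ∫ x : EuclideanSpace ℝ ι, f ‖x‖ * (x j * x j) := by
  classical
  let P := LinearIsometryEquiv.piLpCongrLeft 2 ℝ ℝ (Equiv.swap i j)
  have hP (x : EuclideanSpace ℝ ι) : P x i = x j := by
    simp [P, Equiv.piCongrLeft']
  rw [← integral_comp P]
  simp only [hP, P.norm_map]

variable {f}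

theorem integrable_radial_mul_coord_mul_coord (hf_meas : Measurable f)
    (hf : Integrable fun x : EuclideanSpace ℝ ι => f ‖x‖ * ‖x‖ ^ 2) (i j : ι) :
    Integrable fun x : EuclideanSpace ℝ ι => f ‖x‖ * (x i * x j) := by
  refine hf.mono (by fun_prop) (.of_forall fun x => ?_)
  simp only [norm_mul, norm_norm, sq]
  gcongr <;> exact PiLp.norm_apply_le x _

theorem integral_radial_mul_coord_mul_self (hf_meas : Measurable f)
    (hf : Integrable fun x : EuclideanSpace ℝ ι => f ‖x‖ * ‖x‖ ^ 2) (i : ι) :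
    ∫ x : EuclideanSpace ℝ ι, f ‖x‖ * (x i * x i) =
      (∫ x : EuclideanSpace ℝ ι, f ‖x‖ * ‖x‖ ^ 2) / Fintype.card ι := by
  have : Nonempty ι := ⟨i⟩
  have hcard : (Fintype.card ι : ℝ) ≠ 0 := Nat.cast_ne_zero.2 Fintype.card_ne_zero
  have hsum : ∫ x : EuclideanSpace ℝ ι, f ‖x‖ * ‖x‖ ^ 2 =
      ∑ j, ∫ x : EuclideanSpace ℝ ι, f ‖x‖ * (x j * x j) := by
    rw [← integral_finsetSum _ fun j _ => integrable_radial_mul_coord_mul_coord hf_meas hf j j]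
    congr 1 with x
    rw [EuclideanSpace.real_norm_sq_eq, Finset.mul_sum]
    simp only [sq]
  simp only [hsum, integral_radial_mul_coord_mul_self_eq f _ i, Finset.sum_const,
    Finset.card_univ, nsmul_eq_mul]
  field_simp

theorem integral_radial_mul_dotProduct_mulVec (hf_meas : Measurable f)
    (hf : Integrable fun x : EuclideanSpace ℝ ι => f ‖x‖ * ‖x‖ ^ 2)
    (A : Matrix ι ι ℝ) :
    ∫ x : EuclideanSpace ℝ ι, f ‖x‖ * (x ⬝ᵥ A *ᵥ x) =
      A.trace / Fintype.card ι * ∫ x : EuclideanSpace ℝ ι, f ‖x‖ * ‖x‖ ^ 2 := by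
  classical
  have hexpand (x : EuclideanSpace ℝ ι) :
      f ‖x‖ * (x ⬝ᵥ A *ᵥ x) = ∑ i, ∑ j, A i j * (f ‖x‖ * (x i * x j)) := by
    simp only [dotProduct, mulVec, Finset.mul_sum]
    exact Finset.sum_congr rfl fun i _ => Finset.sum_congr rfl fun j _ => by ring
  have hint (i j : ι) := (integrable_radial_mul_coord_mul_coord hf_meas hf i j).const_mul (A i j)
  simp only [hexpand]
  rw [integral_finsetSum _ fun i _ => integrable_finsetSum _ fun j _ => hint i j]
  simp only [integral_finsetSum _ fun j _ => hint _ j, integral_const_mul]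
  rw [trace, Finset.sum_div, Finset.sum_mul]
  refine Finset.sum_congr rfl fun i _ => ?_
  rw [Finset.sum_eq_single i (fun j _ hji => by
      rw [integral_radial_mul_coord_mul_coord_of_ne f hji.symm, mul_zero]) (by simp),
    integral_radial_mul_coord_mul_self hf_meas hf, diag]
  ring

end RadialMoments

theorem integrableOn_exp_neg_mul_pow (n : ℕ) :
    IntegrableOn (fun y : ℝ => exp (-y) * y ^ n) (Ioi 0) := by
  have := GammaIntegral_convergent (s := n + 1) (by positivity)
  simpa [← rpow_natCast] using this

theorem integral_exp_neg_mul_pow (n : ℕ) :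
    ∫ y in Ioi (0 : ℝ), exp (-y) * y ^ n = n.factorial := by
  rw [← Gamma_nat_eq_factorial, Gamma_eq_integral (by positivity)]
  simp [← rpow_natCast]

section LaplaceKernel

variable {E : Type*} [NormedAddCommGroup E] [NormedSpace ℝ E] [FiniteDimensional ℝ E] [Nontrivial E]

lemma pow_finrank_sub_one_smul_exp_neg_mul_sq :
    (fun y : ℝ => y ^ (finrank ℝ E - 1) • (exp (-y) * y ^ 2)) =
      fun y => exp (-y) * y ^ (finrank ℝ E + 1) := by
  have : finrank ℝ E - 1 + 2 = finrank ℝ E + 1 := by have := finrank_pos (R := ℝ) (M := E); omega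
  ext y
  rw [smul_eq_mul, ← this, pow_add]
  ring

variable [MeasurableSpace E] [BorelSpace E] (μ : Measure E) [μ.IsAddHaarMeasure]

theorem integrable_exp_neg_norm_mul_norm_sq :
    Integrable (fun x => exp (-‖x‖) * ‖x‖ ^ 2) μ := by
  rw [integrable_fun_norm_addHaar μ (f := fun y => exp (-y) * y ^ 2),
    pow_finrank_sub_one_smul_exp_neg_mul_sq]
  exact integrableOn_exp_neg_mul_pow _

theorem integral_exp_neg_norm_mul_norm_sq :
    ∫ x, exp (-‖x‖) * ‖x‖ ^ 2 ∂μ =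
      finrank ℝ E * μ.real (Metric.ball 0 1) * (finrank ℝ E + 1).factorial := by
  rw [integral_fun_norm_addHaar μ (fun y => exp (-y) * y ^ 2),
    pow_finrank_sub_one_smul_exp_neg_mul_sq, integral_exp_neg_mul_pow, nsmul_eq_mul, smul_eq_mul,
    mul_assoc]

end LaplaceKernel

-- The right-hand side is the area `c_{d-1}` of the unit sphere.
theorem EuclideanSpace.natCast_mul_volume_real_unitBall {d : ℕ} (hd : 0 < d) :
    d * volume.real (Metric.ball (0 : EuclideanSpace ℝ (Fin d)) 1) =
      2 * π ^ ((d : ℝ) / 2) / Gamma ((d : ℝ) / 2) := by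
  have : Nonempty (Fin d) := ⟨⟨0, hd⟩⟩
  have hΓ : Gamma ((d : ℝ) / 2 + 1) = d / 2 * Gamma ((d : ℝ) / 2) := Gamma_add_one (by positivity)
  have hπ : √π ^ d = π ^ ((d : ℝ) / 2) := by
    rw [sqrt_eq_rpow, ← rpow_natCast, ← rpow_mul pi_pos.le]
    ring_nf
  rw [measureReal_def, EuclideanSpace.volume_ball, Fintype.card_fin, ENNReal.ofReal_one, one_pow,
    one_mul, ENNReal.toReal_ofReal (by positivity), hΓ, hπ]
  have : 0 < Gamma ((d : ℝ) / 2) := Gamma_pos_of_pos (by positivity)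
  field_simp

theorem integral_exp_neg_norm_mul_dotProduct_mulVec {d : ℕ} (hd : 0 < d)
    (A : Matrix (Fin d) (Fin d) ℝ) :
    ∫ x : EuclideanSpace ℝ (Fin d), exp (-‖x‖) * (x ⬝ᵥ A *ᵥ x) =
      (d + 1) * ((d - 1).factorial * (2 * π ^ ((d : ℝ) / 2) / Gamma ((d : ℝ) / 2))) * A.trace := by
  have : Nontrivial (EuclideanSpace ℝ (Fin d)) :=
    Module.nontrivial_of_finrank_pos (R := ℝ) (by simpa using hd)
  have hfact : ((d + 1).factorial : ℝ) = (d + 1) * d * (d - 1).factorial := by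
    rw [Nat.factorial_succ, ← Nat.mul_factorial_pred hd.ne']
    push_cast
    ring
  have hmeas : Measurable fun y : ℝ => exp (-y) := measurable_neg.exp
  have hint := integrable_exp_neg_norm_mul_norm_sq (volume : Measure (EuclideanSpace ℝ (Fin d)))
  rw [integral_radial_mul_dotProduct_mulVec hmeas hint,
    integral_exp_neg_norm_mul_norm_sq, finrank_euclideanSpace_fin,
    EuclideanSpace.natCast_mul_volume_real_unitBall hd, Fintype.card_fin, hfact]
  have : (d : ℝ) ≠ 0 := by positivity
  field_simp

section ChangeOfVariables

variable {E F : Type*} [NormedAddCommGroup E] [NormedSpace ℝ E] [MeasurableSpace E] [BorelSpace E]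
  [FiniteDimensional ℝ E] [NormedAddCommGroup F] [NormedSpace ℝ F]

theorem MeasureTheory.integral_comp_linearMap (μ : Measure E) [μ.IsAddHaarMeasure]
    {f : E →ₗ[ℝ] E} (hf : LinearMap.det f ≠ 0) (g : E → F) :
    ∫ x, g (f x) ∂μ = |LinearMap.det f|⁻¹ • ∫ x, g x ∂μ := by
  let e := (f.equivOfDetNeZero hf).toContinuousLinearEquiv.toHomeomorph.toMeasurableEquiv
  change ∫ x, g (e x) ∂μ = _
  rw [← integral_map_equiv e g, show Measure.map e μ = Measure.map f μ from rfl,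
    Measure.map_linearMap_addHaar_eq_smul_addHaar μ hf, integral_smul_measure,
    ENNReal.toReal_ofReal (abs_nonneg _), abs_inv]

end ChangeOfVariables

section Substitution

variable {ι : Type*} [Fintype ι] [DecidableEq ι] {T : Matrix ι ι ℝ}

theorem Matrix.integral_comp_toEuclideanLin {F : Type*} [NormedAddCommGroup F] [NormedSpace ℝ F]
    (hT : T.det ≠ 0) (g : EuclideanSpace ℝ ι → F) :
    ∫ x, g (T.toEuclideanLin x) = |T.det|⁻¹ • ∫ x, g x := by
  have hdet : LinearMap.det T.toEuclideanLin = T.det := LinearMap.det_toLpLin 2 T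
  rw [integral_comp_linearMap volume (hdet ▸ hT), hdet]

theorem Matrix.integral_comp_inv_mulVec_mul_dotProduct_mulVec (hT : T.det ≠ 0)
    (g : (ι → ℝ) → ℝ) (B : Matrix ι ι ℝ) :
    ∫ r : EuclideanSpace ℝ ι, g (T⁻¹ *ᵥ r) * (r ⬝ᵥ B *ᵥ r) =
      |T.det| * ∫ x : EuclideanSpace ℝ ι, g x * (x ⬝ᵥ (Tᵀ * B * T) *ᵥ x) := by
  have hT' : IsUnit T.det := hT.isUnit
  have hsubst (x : EuclideanSpace ℝ ι) :
      g (T⁻¹ *ᵥ T.toEuclideanLin x) * (T.toEuclideanLin x ⬝ᵥ B *ᵥ T.toEuclideanLin x) =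
        g x * (x ⬝ᵥ (Tᵀ * B * T) *ᵥ x) := by
    have hx : (T.toEuclideanLin x : ι → ℝ) = T *ᵥ x := rfl
    rw [hx, mulVec_mulVec, nonsing_inv_mul T hT', one_mulVec, ← mulVec_mulVec, ← mulVec_mulVec,
      dotProduct_mulVec x Tᵀ, vecMul_transpose]
  have := integral_comp_toEuclideanLin hT fun r => g (T⁻¹ *ᵥ r) * (r ⬝ᵥ B *ᵥ r)
  simp only [hsubst] at this
  rw [this, smul_eq_mul, ← mul_assoc, mul_inv_cancel₀ (abs_pos.2 hT).ne', one_mul]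

end Substitution

section MatrixSqrt

open scoped MatrixOrder

variable {n : Type*} [Fintype n] [DecidableEq n] {A : Matrix n n ℝ}

lemma Matrix.PosSemidef.sqrt_eq_cfcSqrt (hA : A.PosSemidef) : hA.sqrt = CFC.sqrt A := by
  rw [CFC.sqrt_eq_real_sqrt A hA.nonneg, cfcₙ_eq_cfc, hA.1.cfc_eq, IsHermitian.cfc,
    Unitary.conjStarAlgAut_apply]
  rfl

lemma Matrix.PosSemidef.transpose_sqrt (hA : A.PosSemidef) : hA.sqrtᵀ = hA.sqrt := by
  simpa [hA.sqrt_eq_cfcSqrt] using (CFC.sqrt_nonneg A).posSemidef.1.eq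

lemma Matrix.PosSemidef.det_sqrt_eq_sqrt_det (hA : A.PosSemidef) : hA.sqrt.det = √A.det := by
  simpa [hA.sqrt_eq_cfcSqrt] using hA.det_sqrt

lemma Matrix.PosDef.sqrt_inv (hA : A.PosDef) : hA.inv.posSemidef.sqrt = hA.posSemidef.sqrt⁻¹ := by
  rw [hA.inv.posSemidef.sqrt_eq_cfcSqrt, hA.posSemidef.sqrt_eq_cfcSqrt, hA.posSemidef.inv_sqrt]

end MatrixSqrt

theorem laplace_kernel_second_moment_general (d : ℕ) (hd : 0 < d)
    (S B : Matrix (Fin d) (Fin d) ℝ) (hS : S.PosDef) :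
    (1 / ((d - 1).factorial * (2 * Real.pi ^ ((d : ℝ) / 2) / Real.Gamma ((d : ℝ) / 2)) *
        Real.sqrt S.det)) *
      ∫ r : EuclideanSpace ℝ (Fin d),
        Real.exp (-Real.sqrt (∑ i, ((hS.inv.posSemidef.sqrt).mulVec r i) ^ 2)) *
          dotProduct r (B.mulVec r)
      = (d + 1) * (hS.posSemidef.sqrt * B * hS.posSemidef.sqrt).trace := by
  have hdet := hS.posSemidef.det_sqrt_eq_sqrt_det
  have hdet_pos : 0 < √S.det := sqrt_pos.2 hS.det_pos
  have hZ : 0 < (d - 1).factorial * (2 * π ^ ((d : ℝ) / 2) / Gamma ((d : ℝ) / 2)) := by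
    have := Gamma_pos_of_pos (s := (d : ℝ) / 2) (by positivity)
    positivity
  have hnorm (x : EuclideanSpace ℝ (Fin d)) : √(∑ i, x i ^ 2) = ‖x‖ := by
    simp [EuclideanSpace.norm_eq]
  rw [hS.sqrt_inv, integral_comp_inv_mulVec_mul_dotProduct_mulVec (hdet ▸ hdet_pos.ne')
      (fun v => exp (-√(∑ i, v i ^ 2))) B]
  simp only [hnorm]
  rw [integral_exp_neg_norm_mul_dotProduct_mulVec hd, hS.posSemidef.transpose_sqrt, hdet,
    abs_of_pos hdet_pos]
  field_simp

theorem laplace_kernel_second_moment (d : ℕ) (hd : 0 < d)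
    (S B : Matrix (Fin d) (Fin d) ℝ) (hS : S.PosDef) (hB : B.IsSymm) :
    (1 / ((d - 1).factorial * (2 * Real.pi ^ ((d : ℝ) / 2) / Real.Gamma ((d : ℝ) / 2)) *
        Real.sqrt S.det)) *
      ∫ r : EuclideanSpace ℝ (Fin d),
        Real.exp (-Real.sqrt (∑ i, ((hS.inv.posSemidef.sqrt).mulVec r i) ^ 2)) *
          dotProduct r (B.mulVec r)
      = (d + 1) * (hS.posSemidef.sqrt * B * hS.posSemidef.sqrt).trace :=
  laplace_kernel_second_moment_general d hd S B hS
end
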